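/- Let G be a group containing no free subgroup on two generators, 𝔤 = (g_1,…,g_n) a finite string of elements of G and ℰ a finite partition of G. Suppose a subsystem of Eq(𝔤,ℰ) consisting of n equations is encoded by n×ℓ (0,1)-matrices V and W with ℓ = |Con(𝔤,ℰ)| = 3, satisfying ∑_{i=1}^n (W_i − V_i) = (1,1,1), and there exists an n×n permutation matrix P, associated to a permutation π, such that the first n−1 rows of PW − P⁺V have only nonnegative entries and row π(1) of V contains exactly one entry equal to 1. Then the Tarski number of G equals 5. -/

import Mathlib

namespace PaperStmt

/-- A (0,1)-matrix: every entry is 0 or 1. -/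
def ZeroOneMat {α β : Type*} (M : Matrix α β ℝ) : Prop := ∀ i j, M i j = 0 ∨ M i j = 1

/-- The lower-triangular matrix `T` with all entries on and below the diagonal equal to 1. -/
def Tmat (n : ℕ) : Matrix (Fin n) (Fin n) ℝ := fun i j => if j ≤ i then 1 else 0

/-- The permutation matrix associated to a permutation `σ` (row `i` is `e_{σ i}`). -/
def permMat {n : ℕ} (σ : Equiv.Perm (Fin n)) : Matrix (Fin n) (Fin n) ℝ :=
  fun i j => if σ i = j then 1 else 0

/-- Cyclic successor on `Fin n`. -/
def cycSucc {n : ℕ} (i : Fin n) : Fin n := ⟨(i.val + 1) % n, Nat.mod_lt _ i.pos⟩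

/-- `M⁺`: the matrix `M` with its rows cyclically shifted up by one. -/
def shiftRows {n : ℕ} {ι : Type*} (M : Matrix (Fin n) ι ℝ) : Matrix (Fin n) ι ℝ :=
  fun i j => M (cycSucc i) j

/-- The system `(B - A) X = 0` is *normal* if there is a permutation matrix `P` such that
every entry of `T P (B - A) - P⁺ A` is an integer `≥ -1`. -/
def IsNormal {n : ℕ} {ι : Type*} (A B : Matrix (Fin n) ι ℝ) : Prop :=
  ∃ σ : Equiv.Perm (Fin n), ∀ (i : Fin n) (j : ι),
    ∃ z : ℤ,
      (Tmat n * (permMat σ * (B - A)) - shiftRows (permMat σ) * A) i j = (z : ℝ) ∧ -1 ≤ z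

end PaperStmt

open Pointwise

namespace PaperStmt

/-- A group admits a paradoxical decomposition: there are pairwise disjoint subsets
`A 1, …, A p, B 1, …, B q` and group elements `s i`, `t j` such that the translates
`s i • A i` partition `G` and the translates `t j • B j` partition `G`. -/
def IsParadoxical (G : Type*) [Group G] : Prop :=
  ∃ (p q : ℕ), 0 < p ∧ 0 < q ∧
    ∃ (A : Fin p → Set G) (B : Fin q → Set G) (s : Fin p → G) (t : Fin q → G),
      (∀ i i', i ≠ i' → Disjoint (A i) (A i')) ∧
      (∀ j j', j ≠ j' → Disjoint (B j) (B j')) ∧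
      (∀ i j, Disjoint (A i) (B j)) ∧
      (⋃ i, s i • A i) = Set.univ ∧
      (∀ i i', i ≠ i' → Disjoint (s i • A i) (s i' • A i')) ∧
      (⋃ j, t j • B j) = Set.univ ∧
      (∀ j j', j ≠ j' → Disjoint (t j • B j) (t j' • B j'))

/-- A finitely additive, left-invariant probability measure defined on all subsets of `G`
(the defining property of amenability for a discrete group). -/
def HasLeftInvariantMean (G : Type*) [Group G] : Prop :=
  ∃ μ : Set G → ℝ,
    (∀ A : Set G, 0 ≤ μ A ∧ μ A ≤ 1) ∧
    μ Set.univ = 1 ∧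
    (∀ A B : Set G, Disjoint A B → μ (A ∪ B) = μ A + μ B) ∧
    (∀ (g : G) (A : Set G), μ (g • A) = μ A)

/-- A *complete* paradoxical decomposition with `p + q` pieces: the pieces
`A 1, …, A p, B 1, …, B q` form a partition of `G`, and the translates
`s i • A i` and `t j • B j` each form a partition of `G`. -/
def IsCompleteParadox (G : Type*) [Group G] (p q : ℕ) : Prop :=
  ∃ (A : Fin p → Set G) (B : Fin q → Set G) (s : Fin p → G) (t : Fin q → G),
    (∀ i i', i ≠ i' → Disjoint (A i) (A i')) ∧
    (∀ j j', j ≠ j' → Disjoint (B j) (B j')) ∧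
    (∀ i j, Disjoint (A i) (B j)) ∧
    ((⋃ i, A i) ∪ (⋃ j, B j)) = Set.univ ∧
    (⋃ i, s i • A i) = Set.univ ∧
    (∀ i i', i ≠ i' → Disjoint (s i • A i) (s i' • A i')) ∧
    (⋃ j, t j • B j) = Set.univ ∧
    (∀ j j', j ≠ j' → Disjoint (t j • B j) (t j' • B j'))

/-- The Tarski number of a group: the least total number of pieces `p + q` over all
complete paradoxical decompositions of `G`, and `∞` if there is none. -/
noncomputable def tarskiNumber (G : Type*) [Group G] : ℕ∞ :=
  sInf {N : ℕ∞ | ∃ p q : ℕ, N = ((p + q : ℕ) : ℕ∞) ∧ IsCompleteParadox G p q}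

end PaperStmt

open Pointwise

namespace PaperStmt

/-- `E : Fin m → Set G` is a partition of `G`: pairwise disjoint with union all of `G`. -/
def IsPartition {G : Type*} {m : ℕ} (E : Fin m → Set G) : Prop :=
  (∀ i j, i ≠ j → Disjoint (E i) (E j)) ∧ (⋃ i, E i) = Set.univ

/-- `C = (c_0, …, c_n)` is a configuration for the pair `(g, E)`: there is `x ∈ E (c 0)`
with `g i * x ∈ E (c i)` for `1 ≤ i ≤ n`. -/
def IsConfig {G : Type*} [Group G] {n m : ℕ} (g : Fin n → G) (E : Fin m → Set G)
    (C : Fin (n + 1) → Fin m) : Prop :=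
  ∃ x : G, x ∈ E (C 0) ∧ ∀ i : Fin n, g i * x ∈ E (C i.succ)

/-- `x_0(C) = E_{c_0} ∩ ⋂_{j=1}^n g_j⁻¹ E_{c_j}`. -/
def xzero {G : Type*} [Group G] {n m : ℕ} (g : Fin n → G) (E : Fin m → Set G)
    (C : Fin (n + 1) → Fin m) : Set G :=
  E (C 0) ∩ ⋂ i : Fin n, (g i)⁻¹ • E (C i.succ)

/-- The string `(g_0, g_1, …, g_n)` with `g_0 = e`. -/
def ghat {G : Type*} [Group G] {n : ℕ} (g : Fin n → G) : Fin (n + 1) → G := Fin.cons 1 g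

/-- `x_j(C) = g_j • x_0(C)` for `0 ≤ j ≤ n` (with `g_0 = e`). -/
def xj {G : Type*} [Group G] {n m : ℕ} (g : Fin n → G) (E : Fin m → Set G)
    (C : Fin (n + 1) → Fin m) (j : Fin (n + 1)) : Set G :=
  ghat g j • xzero g E C

/-- The real-valued indicator of a proposition. -/
noncomputable def ind (P : Prop) : ℝ :=
  letI := Classical.propDecidable P; if P then 1 else 0

/-- `f` is a solution of the system of configuration equations `Eq(g, E)`:
for all `1 ≤ i ≤ m` and `0 ≤ j, k ≤ n`,
`∑_{C : x_j(C) ⊆ E_i} f C = ∑_{C : x_k(C) ⊆ E_i} f C`. -/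
def IsEqSolution {G : Type*} [Group G] {n m : ℕ} (g : Fin n → G) (E : Fin m → Set G)
    (f : {C : Fin (n + 1) → Fin m // IsConfig g E C} → ℝ) : Prop :=
  ∀ (i : Fin m) (j k : Fin (n + 1)),
    ∑ᶠ C ∈ {C : {C : Fin (n + 1) → Fin m // IsConfig g E C} | xj g E C.1 j ⊆ E i}, f C =
    ∑ᶠ C ∈ {C : {C : Fin (n + 1) → Fin m // IsConfig g E C} | xj g E C.1 k ⊆ E i}, f C

end PaperStmt

/-!
The cells `x₀(C)` of the configurations partition `G`, and the equation in row `t` says that the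
union of the cells with `C (j t) = i t` is a translate of the union of those with `C (k t) = i t`.
Ordered by `σ`, the rows form a chain: the cells `V_k` of row `k` are carried by `h_k⁻¹` onto the
cells `W_k`, which contain the cells `V_{k+1}` of the next row. Starting from the single cell
`V_0 = {C₀}` and unrolling the chain tiles `x₀(C₀)` by translates of cells, one translate of
`x₀(C)` for each `k` with `C ∈ W_k \ V_{k+1}`. The column sums `∑ (W_t - V_t) = 1` telescope to
show that every cell occurs exactly once, except `x₀(C₀)`, which occurs twice. With three cells
this is a paradoxical decomposition with `3 + 2` pieces. Conversely every paradoxical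
decomposition has at least `2 + 2` pieces, and one with exactly `2 + 2` pieces produces a free
subgroup of rank two by ping-pong.
-/

namespace PaperStmt

open Function Set

theorem iUnion_fin_two {α : Type*} (P : Fin 2 → Set α) : ⋃ j, P j = P 0 ∪ P 1 := by
  ext; simp [Fin.exists_fin_two]

section Paradox

variable {G : Type*} [Group G]

theorem IsCompleteParadox.symm {p q : ℕ} (h : IsCompleteParadox G p q) :
    IsCompleteParadox G q p := by
  obtain ⟨A, B, s, t, hA, hB, hAB, hcov, hsU, hsD, htU, htD⟩ := h
  exact ⟨B, A, t, s, hB, hA, fun j i => (hAB i j).symm, by rwa [union_comm], htU, htD, hsU, hsD⟩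

theorem IsCompleteParadox.two_le_left {p q : ℕ} (h : IsCompleteParadox G p q) : 2 ≤ p := by
  obtain ⟨A, B, s, t, -, -, hAB, -, hsU, -, htU, -⟩ := h
  by_contra! hp
  obtain ⟨j, y, hy, -⟩ := mem_iUnion.mp (htU ▸ mem_univ (1 : G))
  obtain ⟨i₀, -⟩ := mem_iUnion.mp (hsU ▸ mem_univ (1 : G))
  obtain ⟨i, hi⟩ := mem_iUnion.mp (hsU ▸ mem_univ (s i₀ • y))
  obtain rfl : i = i₀ := Fin.ext (by omega)
  exact disjoint_left.mp (hAB i j) (smul_mem_smul_set_iff.mp hi) hy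

theorem inv_mul_smul_eq_compl {P : Fin 2 → Set G} {u : Fin 2 → G} (hU : ⋃ i, u i • P i = univ)
    (hD : ∀ i i', i ≠ i' → Disjoint (u i • P i) (u i' • P i')) :
    ((u 0)⁻¹ * u 1) • P 1 = (P 0)ᶜ := by
  have h : IsCompl (u 0 • P 0) (u 1 • P 1) :=
    ⟨hD 0 1 (by decide), codisjoint_iff.mpr (show _ ∪ _ = univ by rw [← hU, iUnion_fin_two])⟩
  rw [mul_smul, h.symm.eq_compl, ← smul_set_compl, inv_smul_smul]

theorem nonempty_of_smul_eq_compl {a : G} {P Q R : Set G} (hPQ : a • Q = Pᶜ)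
    (hQR : Disjoint Q R) (hR : R.Nonempty) : P.Nonempty := by
  rw [nonempty_iff_ne_empty]
  rintro rfl
  rw [compl_empty, smul_set_eq_univ] at hPQ
  rw [hPQ, univ_disjoint] at hQR
  exact hR.ne_empty hQR

theorem IsCompleteParadox.exists_injective_freeGroup (h : IsCompleteParadox G 2 2) :
    ∃ φ : FreeGroup (Fin 2) →* G, Injective φ := by
  obtain ⟨A, B, s, t, hA, hB, hAB, -, hsU, hsD, htU, htD⟩ := h
  have ha := inv_mul_smul_eq_compl hsU hsD
  have hb := inv_mul_smul_eq_compl htU htD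
  obtain ⟨i, x, hx, -⟩ := mem_iUnion.mp (hsU ▸ mem_univ (1 : G))
  obtain ⟨j, y, hy, -⟩ := mem_iUnion.mp (htU ▸ mem_univ (1 : G))
  have hA0 := nonempty_of_smul_eq_compl ha (hAB 1 j) ⟨y, hy⟩
  have hB0 := nonempty_of_smul_eq_compl hb (hAB i 1).symm ⟨x, hx⟩
  let gen : ULift (Fin 2) → G := fun k => ![(s 0)⁻¹ * s 1, (t 0)⁻¹ * t 1] k.down
  let X : ULift (Fin 2) → Set G := fun k => ![A 0, B 0] k.down
  let Y : ULift (Fin 2) → Set G := fun k => ![A 1, B 1] k.down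
  have hinj : Injective (FreeGroup.lift gen) := by
    refine FreeGroup.injective_lift_of_ping_pong gen X Y ?_ ?_ ?_ ?_ ?_ ?_
    · rintro ⟨k⟩; fin_cases k <;> simpa [X]
    · rintro ⟨k⟩ ⟨l⟩ hkl
      fin_cases k <;> fin_cases l <;> simp_all [X, onFun, disjoint_comm]
    · rintro ⟨k⟩ ⟨l⟩ hkl
      fin_cases k <;> fin_cases l <;> simp_all [Y, onFun, disjoint_comm]
    · rintro ⟨k⟩ ⟨l⟩
      fin_cases k <;> fin_cases l <;> simp_all [X, Y, disjoint_comm]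
    · rintro ⟨k⟩; fin_cases k <;> simp [X, Y, gen, smul_set_compl, ha, hb]
    · rintro ⟨k⟩; fin_cases k <;> simp [X, Y, gen, ← ha, ← hb, -mul_inv_rev]
  exact ⟨(FreeGroup.lift gen).comp (FreeGroup.freeGroupCongr Equiv.ulift.symm).toMonoidHom,
    hinj.comp (MulEquiv.injective _)⟩

end Paradox

section Tarski

variable {G : Type*} [Group G]

theorem IsCompleteParadox.five_le_add (hfree : ¬∃ φ : FreeGroup (Fin 2) →* G, Injective φ)
    {p q : ℕ} (h : IsCompleteParadox G p q) : 5 ≤ p + q := by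
  have hp := h.two_le_left
  have hq := h.symm.two_le_left
  by_contra! hlt
  obtain rfl : p = 2 := by omega
  obtain rfl : q = 2 := by omega
  exact hfree h.exists_injective_freeGroup

theorem tarskiNumber_eq_five_of_isCompleteParadox
    (hfree : ¬∃ φ : FreeGroup (Fin 2) →* G, Injective φ) (h : IsCompleteParadox G 3 2) : tarskiNumber G = 5 :=
  le_antisymm (sInf_le ⟨3, 2, rfl, h⟩) <| le_sInf <| by
    rintro _ ⟨p, q, rfl, hpq⟩
    exact_mod_cast hpq.five_le_add hfree

end Tarski

section Tiling

variable {G : Type*} [Group G] {ι : Type*}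

def IsTiledBy (S : Set G) (X : ι → Set G) (T : Set ι) : Prop :=
  ∃ c : ι → G, T.PairwiseDisjoint (fun i => c i • X i) ∧ ⋃ i ∈ T, c i • X i = S

theorem isTiledBy_biUnion {X : ι → Set G} {T : Set ι} (hX : T.PairwiseDisjoint X) :
    IsTiledBy (⋃ i ∈ T, X i) X T :=
  ⟨1, by simpa using hX, by simp⟩

theorem IsTiledBy.smul {S : Set G} {X : ι → Set G} {T : Set ι} (h : IsTiledBy S X T) (a : G) :
    IsTiledBy (a • S) X T := by
  obtain ⟨c, hc, rfl⟩ := h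
  refine ⟨fun i => a * c i, fun i hi j hj hij => ?_, ?_⟩
  · simpa [onFun, mul_smul, disjoint_smul_set] using hc hi hj hij
  · simp [smul_set_iUnion₂, mul_smul]

theorem IsTiledBy.union {S₁ S₂ : Set G} {X : ι → Set G} {T₁ T₂ : Set ι}
    (h₁ : IsTiledBy S₁ X T₁) (h₂ : IsTiledBy S₂ X T₂) (hS : Disjoint S₁ S₂)
    (hT : Disjoint T₁ T₂) : IsTiledBy (S₁ ∪ S₂) X (T₁ ∪ T₂) := by
  classical
  obtain ⟨c₁, hc₁, rfl⟩ := h₁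
  obtain ⟨c₂, hc₂, rfl⟩ := h₂
  set c := T₁.piecewise c₁ c₂
  have e₁ : EqOn c c₁ T₁ := T₁.piecewise_eqOn c₁ c₂
  have e₂ : EqOn c c₂ T₂ := fun i hi => T₁.piecewise_eq_of_notMem _ _ (disjoint_right.mp hT hi)
  refine ⟨c, pairwiseDisjoint_union.mpr ⟨?_, ?_, ?_⟩, ?_⟩
  · intro i hi j hj hij
    simpa [onFun, e₁ hi, e₁ hj] using hc₁ hi hj hij
  · intro i hi j hj hij
    simpa [onFun, e₂ hi, e₂ hj] using hc₂ hi hj hij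
  · intro i hi j hj _
    rw [e₁ hi, e₂ hj]
    exact hS.mono (subset_biUnion_of_mem (u := fun i => c₁ i • X i) hi)
      (subset_biUnion_of_mem (u := fun i => c₂ i • X i) hj)
  · rw [biUnion_union]
    congr 1
    · exact iUnion₂_congr fun i hi => by rw [e₁ hi]
    · exact iUnion₂_congr fun i hi => by rw [e₂ hi]

theorem IsTiledBy.comp_of_bijOn {ι' : Type*} {S : Set G} {X : ι → Set G} {T : Set ι}
    {f : ι' → ι} {T' : Set ι'} (h : IsTiledBy S X T) (hf : BijOn f T' T) :
    IsTiledBy S (X ∘ f) T' := by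
  obtain ⟨c, hc, rfl⟩ := h
  refine ⟨c ∘ f, ?_, ?_⟩
  · exact hf.injOn.pairwiseDisjoint_image (f := fun i => c i • X i) |>.mp (hf.image_eq ▸ hc)
  · rw [← hf.image_eq, biUnion_image]
    rfl

end Tiling

theorem disjoint_biUnion_of_disjoint {α κ : Type*} {X : κ → Set α} (hX : Pairwise (Disjoint on X))
    {s t : Set κ} (hst : Disjoint s t) : Disjoint (⋃ C ∈ s, X C) (⋃ C ∈ t, X C) := by
  simp only [disjoint_iUnion₂_left, disjoint_iUnion₂_right]
  exact fun C hC C' hC' => hX (hst.ne_of_mem hC' hC)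

section Chain

variable {G : Type*} [Group G] {κ : Type*} {X : κ → Set G}

theorem isTiledBy_singleton_prod {ι : Type*} (hX : Pairwise (Disjoint on X)) (k : ι) (s : Set κ) :
    IsTiledBy (⋃ C ∈ s, X C) (X ∘ Prod.snd) ({k} ×ˢ s) := by
  have hD : ({k} ×ˢ s).PairwiseDisjoint (X ∘ Prod.snd) := by
    rintro ⟨i, C⟩ ⟨rfl, -⟩ ⟨i', C'⟩ ⟨rfl, -⟩ hne
    exact hX fun hCC => hne (by simp_all)
  simpa [singleton_prod, biUnion_image] using isTiledBy_biUnion hD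

theorem isTiledBy_of_chain (hX : Pairwise (Disjoint on X)) {n : ℕ} {W V : ℕ → Set κ} {h : ℕ → G}
    (hWV : ∀ k < n, ⋃ C ∈ W k, X C = h k • ⋃ C ∈ V k, X C)
    (hVW : ∀ k < n, V (k + 1) ⊆ W k) (hVn : V n = ∅) :
    IsTiledBy (⋃ C ∈ V 0, X C) (X ∘ Prod.snd)
      {p | p.1 < n ∧ p.2 ∈ W p.1 \ V (p.1 + 1)} := by
  suffices ∀ k ≤ n, IsTiledBy (⋃ C ∈ V k, X C) (X ∘ Prod.snd)
      {p | k ≤ p.1 ∧ p.1 < n ∧ p.2 ∈ W p.1 \ V (p.1 + 1)} by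
    simpa using this 0 n.zero_le
  intro k hk
  induction hk using Nat.decreasingInduction with
  | self =>
    have hT : {p : ℕ × κ | n ≤ p.1 ∧ p.1 < n ∧ p.2 ∈ W p.1 \ V (p.1 + 1)} = ∅ := by
      ext p; simp only [mem_ofPred_eq, mem_empty_iff_false, iff_false]; omega
    rw [hT, hVn, biUnion_empty]
    exact ⟨1, pairwiseDisjoint_empty, biUnion_empty _⟩
  | of_succ k hk ih =>
    -- `h k` carries `V k` onto `W k`; the cells of `W k \ V (k + 1)` are tiles placed at step `k`,
    -- while `V (k + 1)` is passed on to the next step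
    have hcells : ⋃ C ∈ V k, X C =
        (h k)⁻¹ • ((⋃ C ∈ W k \ V (k + 1), X C) ∪ ⋃ C ∈ V (k + 1), X C) := by
      rw [← biUnion_union, sdiff_union_of_subset (hVW k hk), hWV k hk, inv_smul_smul]
    have hT : {p : ℕ × κ | k ≤ p.1 ∧ p.1 < n ∧ p.2 ∈ W p.1 \ V (p.1 + 1)} =
        {k} ×ˢ (W k \ V (k + 1)) ∪ {p | k + 1 ≤ p.1 ∧ p.1 < n ∧ p.2 ∈ W p.1 \ V (p.1 + 1)} := by
      ext ⟨i, C⟩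
      simp only [mem_ofPred_eq, mem_union, mem_prod, mem_singleton_iff]
      constructor
      · rintro ⟨hki, hin, hC⟩
        rcases hki.eq_or_lt with rfl | hlt
        · exact Or.inl ⟨rfl, hC⟩
        · exact Or.inr ⟨hlt, hin, hC⟩
      · rintro (⟨rfl, hC⟩ | ⟨hki, hin, hC⟩)
        · exact ⟨le_rfl, hk, hC⟩
        · exact ⟨k.le_succ.trans hki, hin, hC⟩
    rw [hcells, hT]
    refine ((isTiledBy_singleton_prod hX k _).union ih
      (disjoint_biUnion_of_disjoint hX disjoint_sdiff_left) ?_).smul _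
    rw [Set.disjoint_left]
    rintro ⟨i, C⟩ ⟨rfl, -⟩ ⟨hki, -⟩
    simp at hki

end Chain

section Indicator

theorem ind_pos {P : Prop} (h : P) : ind P = 1 := by simp [ind, h]

theorem ind_neg {P : Prop} (h : ¬P) : ind P = 0 := by simp [ind, h]

theorem ind_eq_one_iff {P : Prop} : ind P = 1 ↔ P := by
  by_cases h : P <;> simp [ind, h]

theorem ind_mem_sdiff {α : Type*} {s t : Set α} (hts : t ⊆ s) (a : α) :
    ind (a ∈ s \ t) = ind (a ∈ s) - ind (a ∈ t) := by
  by_cases ht : a ∈ t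
  · rw [ind_neg (fun h : a ∈ s \ t => h.2 ht), ind_pos ht, ind_pos (hts ht), sub_self]
  · by_cases hs : a ∈ s <;> simp [ind, hs, ht]

theorem imp_of_ind_sub_nonneg {P Q : Prop} (h : 0 ≤ ind P - ind Q) (hQ : Q) : P := by
  by_contra hP
  rw [ind_neg hP, ind_pos hQ] at h
  norm_num at h

theorem exists_eq_singleton_of_card_ind {α : Type*} {s : Set α}
    (h : Nat.card {a // ind (a ∈ s) = 1} = 1) : ∃ a, s = {a} := by
  simp only [ind_eq_one_iff] at h
  exact ncard_eq_one.mp h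

end Indicator

section Counting

open Finset

theorem sum_ind_eq_card {α : Type*} (s : Finset α) (p : α → Prop) [DecidablePred p] :
    ∑ a ∈ s, ind (p a) = #{a ∈ s | p a} := by
  rw [← sum_boole]
  exact sum_congr rfl fun a _ => by simp [ind]

theorem sum_range_ind_mem_sdiff_succ {κ : Type*} {n : ℕ} {W V : ℕ → Set κ}
    (hVW : ∀ k < n, V (k + 1) ⊆ W k) (hVn : V n = ∅) {C : κ} (hsum : ∑ k ∈ range n, (ind (C ∈ W k) - ind (C ∈ V k)) = 1) :
    ∑ k ∈ range n, ind (C ∈ W k \ V (k + 1)) = 1 + ind (C ∈ V 0) :=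
  calc ∑ k ∈ range n, ind (C ∈ W k \ V (k + 1))
      = ∑ k ∈ range n, ((ind (C ∈ W k) - ind (C ∈ V k)) -
          (ind (C ∈ V (k + 1)) - ind (C ∈ V k))) :=
        sum_congr rfl fun k hk => by rw [ind_mem_sdiff (hVW k (mem_range.mp hk))]; ring
    _ = 1 + ind (C ∈ V 0) := by
        rw [sum_sub_distrib, hsum, sum_range_sub (fun k => ind (C ∈ V k)), hVn,
          ind_neg (Set.notMem_empty C)]
        ring

theorem exists_bijOn_option_of_card {α κ : Type*} (F : κ → Finset α) {C₀ : κ} (h₀ : #(F C₀) = 2)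
    (h₁ : ∀ C ≠ C₀, #(F C) = 1) :
    ∃ f : Option κ → α × κ, BijOn f univ {p | p.1 ∈ F p.2} ∧ ∀ o, (f o).2 = o.getD C₀ := by
  have hne : ∀ C, (F C).Nonempty := fun C => card_pos.mp <| by
    by_cases hC : C = C₀
    · rw [hC, h₀]; norm_num
    · rw [h₁ C hC]; norm_num
  choose a ha using hne
  obtain ⟨b, hb, hba⟩ := exists_mem_ne (h₀ ▸ one_lt_two) (a C₀)
  refine ⟨fun o => o.elim (b, C₀) fun C => (a C, C), ⟨?_, ?_, ?_⟩, by rintro (_ | C) <;> rfl⟩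
  · rintro (_ | C) -
    exacts [hb, ha C]
  · rintro (_ | C) - (_ | C') - hCC' <;> simp_all [eq_comm]
  · rintro ⟨k, C⟩ hk
    by_cases hC : C = C₀
    · subst hC
      by_cases hka : k = a C
      · exact ⟨some C, trivial, by simp [hka]⟩
      by_cases hkb : k = b
      · exact ⟨none, trivial, by simp [hkb]⟩
      have := two_lt_card.mpr ⟨k, hk, a C, ha C, b, hb, hka, hkb, hba.symm⟩
      simp only at this
      omega
    · obtain rfl := card_le_one.mp (h₁ C hC).le k hk (a C) (ha C)
      exact ⟨some C, trivial, rfl⟩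

end Counting

section Assembly

open Finset

variable {G : Type*} [Group G] {κ : Type*} [Finite κ] {X : κ → Set G}

-- `some C` indexes a translate of `X C`, and `none` one more translate of `X C₀`.
theorem isCompleteParadox_of_isTiledBy (hX : Pairwise (Disjoint on X)) (hcov : ⋃ C, X C = univ)
    {C₀ : κ} (h : IsTiledBy (X C₀) (fun o : Option κ => X (o.getD C₀)) univ) :
    IsCompleteParadox G (Nat.card κ) 2 := by
  obtain ⟨c, hc, hcU⟩ := h
  set e := (Finite.equivFin κ).symm
  have hpiece : ∀ o, c o • X (o.getD C₀) ⊆ X C₀ := fun o =>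
    hcU ▸ subset_biUnion_of_mem (u := fun o => c o • X (o.getD C₀)) (mem_univ o)
  have hdisj : ∀ o o', o ≠ o' → Disjoint (c o • X (o.getD C₀)) (c o' • X (o'.getD C₀)) :=
    fun o o' hne => hc (mem_univ o) (mem_univ o') hne
  have hsplit : (⋃ i, c (some (e i)) • X (e i)) ∪ c none • X C₀ = X C₀ := by
    conv_rhs => rw [← hcU, biUnion_univ, iUnion_option, union_comm]
    simp only [Option.getD_none, Option.getD_some, e.surjective.iUnion_comp (fun C => c C • X C)]
  refine ⟨fun i => c (some (e i)) • X (e i), ![c none • X C₀, (X C₀)ᶜ],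
    fun i => (c (some (e i)))⁻¹, ![(c none)⁻¹, 1], ?_, ?_, ?_, ?_, ?_, ?_, ?_, ?_⟩
  · exact fun i i' hii' => hdisj _ _ (by simpa using e.injective.ne hii')
  · intro j j' hjj'
    fin_cases j <;> fin_cases j' <;> simp at hjj' ⊢
    exacts [disjoint_compl_right.mono_left (hpiece none),
      (disjoint_compl_right.mono_left (hpiece none)).symm]
  · intro i j
    fin_cases j <;> simp only [Fin.zero_eta, Fin.mk_one, Matrix.cons_val_zero, Matrix.cons_val_one,
      Matrix.cons_val_fin_one]
    exacts [hdisj (some (e i)) none (Option.some_ne_none _),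
      disjoint_compl_right.mono_left (hpiece (some (e i)))]
  · rw [iUnion_fin_two, ← union_assoc]
    simp [hsplit]
  · simp only [inv_smul_smul, e.surjective.iUnion_comp X, hcov]
  · intro i i' hii'
    simpa only [inv_smul_smul] using hX (e.injective.ne hii')
  · simp [iUnion_fin_two]
  · intro j j' hjj'
    fin_cases j <;> fin_cases j' <;> simp at hjj' ⊢
    exacts [disjoint_compl_right, disjoint_compl_left]

theorem isCompleteParadox_of_chain (hX : Pairwise (Disjoint on X)) (hcov : ⋃ C, X C = univ)
    {n : ℕ} (hn : 0 < n) {w v : Fin n → Set κ} {h : Fin n → G}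
    (hwv : ∀ t, ⋃ C ∈ w t, X C = h t • ⋃ C ∈ v t, X C)
    (hvw : ∀ (t : Fin n) (ht : t.val + 1 < n), v ⟨t + 1, ht⟩ ⊆ w t)
    {C₀ : κ} (hv₀ : v ⟨0, hn⟩ = {C₀}) (hsum : ∀ C, ∑ t, (ind (C ∈ w t) - ind (C ∈ v t)) = 1) :
    IsCompleteParadox G (Nat.card κ) 2 := by
  classical
  set W : ℕ → Set κ := fun k => if hk : k < n then w ⟨k, hk⟩ else ∅
  set V : ℕ → Set κ := fun k => if hk : k < n then v ⟨k, hk⟩ else ∅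
  have hVn : V n = ∅ := by simp [V]
  have hVW : ∀ k < n, V (k + 1) ⊆ W k := fun k hk => by
    by_cases hk' : k + 1 < n
    · simpa [V, W, hk, hk'] using hvw ⟨k, hk⟩ hk'
    · simp [V, hk']
  have htile := isTiledBy_of_chain hX (h := fun k => if hk : k < n then h ⟨k, hk⟩ else 1)
    (fun k hk => by simpa [W, V, hk] using hwv ⟨k, hk⟩) hVW hVn
  have hcount (C : κ) : (#{k ∈ range n | C ∈ W k \ V (k + 1)} : ℝ) = 1 + ind (C = C₀) := by
    rw [← sum_ind_eq_card, sum_range_ind_mem_sdiff_succ hVW hVn]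
    · simp [V, hn, hv₀]
    · rw [← Fin.sum_univ_eq_sum_range (fun k => ind (C ∈ W k) - ind (C ∈ V k))]
      simpa [W, V] using hsum C
  obtain ⟨f, hf, hf₂⟩ := exists_bijOn_option_of_card (fun C => {k ∈ range n | C ∈ W k \ V (k + 1)})
    (C₀ := C₀) (by have h := hcount C₀; norm_num [ind_pos] at h; exact_mod_cast h)
    (fun C hC => by have h := hcount C; rw [ind_neg hC, add_zero] at h; exact_mod_cast h)
  refine isCompleteParadox_of_isTiledBy hX hcov (C₀ := C₀) ?_
  have hV0 : ⋃ C ∈ V 0, X C = X C₀ := by simp [V, hn, hv₀]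
  have hT : {p : ℕ × κ | p.1 ∈ (fun C => {k ∈ range n | C ∈ W k \ V (k + 1)}) p.2} =
      {p | p.1 < n ∧ p.2 ∈ W p.1 \ V (p.1 + 1)} := by
    ext; simp
  have hXf : (X ∘ Prod.snd) ∘ f = fun o => X (o.getD C₀) := funext fun o => congrArg X (hf₂ o)
  rw [← hV0, ← hXf]
  exact htile.comp_of_bijOn (hT ▸ hf)

end Assembly

section Configurations

variable {G : Type*} [Group G] {n m : ℕ} {g : Fin n → G} {E : Fin m → Set G}

theorem mem_xzero_iff {C : Fin (n + 1) → Fin m} {x : G} :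
    x ∈ xzero g E C ↔ ∀ j, ghat g j * x ∈ E (C j) := by
  simp [xzero, ghat, Fin.forall_fin_succ, mem_inv_smul_set_iff]

theorem isConfig_iff_nonempty {C : Fin (n + 1) → Fin m} :
    IsConfig g E C ↔ (xzero g E C).Nonempty := by
  simp [IsConfig, Set.Nonempty, mem_xzero_iff, Fin.forall_fin_succ, ghat]

theorem xzero_pairwiseDisjoint (hE : IsPartition E) :
    Pairwise (Disjoint on fun C : {C // IsConfig g E C} => xzero g E C.1) := by
  intro C C' hne
  refine Set.disjoint_left.mpr fun x hx hx' => hne (Subtype.ext (funext fun j => ?_))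
  by_contra hj
  exact Set.disjoint_left.mp (hE.1 _ _ hj) (mem_xzero_iff.mp hx j) (mem_xzero_iff.mp hx' j)

theorem iUnion_xzero (hE : IsPartition E) : ⋃ C : {C // IsConfig g E C}, xzero g E C.1 = univ := by
  refine eq_univ_of_forall fun x => ?_
  choose color hcolor using fun y => mem_iUnion.mp (hE.2 ▸ mem_univ y)
  have hx : x ∈ xzero g E (fun j => color (ghat g j * x)) := mem_xzero_iff.mpr fun j => hcolor _
  exact mem_iUnion.mpr ⟨⟨_, isConfig_iff_nonempty.mpr ⟨x, hx⟩⟩, hx⟩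

theorem xj_subset_iff (hE : IsPartition E) (C : {C // IsConfig g E C}) (j : Fin (n + 1))
    (i : Fin m) : xj g E C.1 j ⊆ E i ↔ C.1 j = i := by
  have hsub : xj g E C.1 j ⊆ E (C.1 j) := by
    rintro _ ⟨x, hx, rfl⟩
    exact mem_xzero_iff.mp hx j
  refine ⟨fun h => ?_, fun h => h ▸ hsub⟩
  obtain ⟨x, hx⟩ := isConfig_iff_nonempty.mp C.2
  have hx' : ghat g j • x ∈ xj g E C.1 j := smul_mem_smul_set hx
  by_contra hne
  exact Set.disjoint_left.mp (hE.1 _ _ hne) (hsub hx') (h hx')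

theorem biUnion_xzero_eq (hE : IsPartition E) (j : Fin (n + 1)) (i : Fin m) :
    ⋃ C ∈ {C : {C // IsConfig g E C} | C.1 j = i}, xzero g E C.1 = (ghat g j)⁻¹ • E i := by
  ext x
  simp only [mem_iUnion, mem_ofPred_eq, exists_prop, mem_inv_smul_set_iff, smul_eq_mul]
  constructor
  · rintro ⟨C, rfl, hx⟩
    exact mem_xzero_iff.mp hx j
  · intro hx
    obtain ⟨C, hC⟩ := mem_iUnion.mp (iUnion_xzero hE ▸ mem_univ x)
    refine ⟨C, ?_, hC⟩
    by_contra hne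
    exact Set.disjoint_left.mp (hE.1 _ _ hne) (mem_xzero_iff.mp hC j) hx

end Configurations

section Matrices

variable {n : ℕ} {ι : Type*}

theorem permMat_mul_apply (σ : Equiv.Perm (Fin n)) (M : Matrix (Fin n) ι ℝ) (i : Fin n) (j : ι) :
    (permMat σ * M) i j = M (σ i) j := by
  simp [Matrix.mul_apply, permMat]

theorem shiftRows_mul (A : Matrix (Fin n) (Fin n) ℝ) (B : Matrix (Fin n) ι ℝ) :
    shiftRows A * B = shiftRows (A * B) :=
  rfl

theorem cycSucc_of_lt {i : Fin n} (h : i.val + 1 < n) : cycSucc i = ⟨i + 1, h⟩ :=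
  Fin.ext (Nat.mod_eq_of_lt h)

end Matrices

/-- Suppose `G` contains no free subgroup on two generators, and a subsystem of `Eq(g, E)` of
`n` equations is encoded by `n × ℓ` (0,1)-matrices `V`, `W` with `ℓ = |Con(g, E)| = 3`,
`∑_i (W_i - V_i) = (1, 1, 1)`, and there is a permutation matrix `P` (associated to `σ`) such
that the first `n - 1` rows of `P W - P⁺ V` are nonnegative and row `σ(1)` of `V` contains
exactly one entry equal to `1`. Then `τ(G) = 5`. -/
theorem tarski_eq_five {G : Type*} [Group G] {n m : ℕ} (hn : 0 < n)
    (hfree : ¬∃ φ : FreeGroup (Fin 2) →* G, Function.Injective φ)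
    (g : Fin n → G) (E : Fin m → Set G) (hE : IsPartition E)
    (iT : Fin n → Fin m) (jT kT : Fin n → Fin (n + 1))
    (V W : Matrix (Fin n) {C : Fin (n + 1) → Fin m // IsConfig g E C} ℝ)
    (hV : ∀ t C, V t C = ind (xj g E C.1 (kT t) ⊆ E (iT t)))
    (hW : ∀ t C, W t C = ind (xj g E C.1 (jT t) ⊆ E (iT t)))
    (hcard : Nat.card {C : Fin (n + 1) → Fin m // IsConfig g E C} = 3)
    (hsum : ∀ C, ∑ i, (W i C - V i C) = 1)
    (σ : Equiv.Perm (Fin n))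
    (hrows : ∀ i : Fin n, i.val + 1 < n → ∀ C,
      0 ≤ (permMat σ * W - shiftRows (permMat σ) * V) i C)
    (hrow1 : Nat.card
      {C : {C : Fin (n + 1) → Fin m // IsConfig g E C} // V (σ ⟨0, hn⟩) C = 1} = 1) :
    tarskiNumber G = (5 : ℕ∞) := by
  let rows (j : Fin n → Fin (n + 1)) (t : Fin n) : Set {C // IsConfig g E C} :=
    {C | C.1 (j (σ t)) = iT (σ t)}
  have hV' (t C) : V (σ t) C = ind (C ∈ rows kT t) := by rw [hV, xj_subset_iff hE]; rfl
  have hW' (t C) : W (σ t) C = ind (C ∈ rows jT t) := by rw [hW, xj_subset_iff hE]; rfl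
  obtain ⟨C₀, hC₀⟩ := exists_eq_singleton_of_card_ind (s := rows kT ⟨0, hn⟩)
    (by simpa only [hV'] using hrow1)
  refine tarskiNumber_eq_five_of_isCompleteParadox hfree <| hcard ▸ isCompleteParadox_of_chain
    (xzero_pairwiseDisjoint hE) (iUnion_xzero hE) hn
    (w := rows jT) (h := fun t => (ghat g (jT (σ t)))⁻¹ * ghat g (kT (σ t))) (fun t => ?_)
    (fun t ht C hC => ?_) hC₀ (fun C => ?_)
  · rw [biUnion_xzero_eq hE, biUnion_xzero_eq hE, mul_smul, smul_inv_smul]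
  · have h := hrows t ht C
    rw [Matrix.sub_apply, permMat_mul_apply, shiftRows_mul, shiftRows, permMat_mul_apply,
      cycSucc_of_lt ht, hW', hV'] at h
    exact imp_of_ind_sub_nonneg h hC
  · rw [← hsum C, ← Equiv.sum_comp σ (fun i => W i C - V i C)]
    simp only [hV', hW']

end PaperStmt
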